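/- Let q = p^k with p prime and suppose T = p^u · M with u ≥ 1 and gcd(M, q) = 1. A polynomial f over GF(q) of degree r with f(0) = 1 and period set {1, T} exists if and only if M = 1, u = 1, and 2 ≤ r ≤ p; in that case necessarily f(x) = (1-x)^r. -/

import Mathlib

open Polynomial

/-- The order of a polynomial `g` (with `g(0) ≠ 0`): the least `j ≥ 1` with `g ∣ x^j - 1`. -/
noncomputable def polyOrd {F : Type*} [Field F] (g : Polynomial F) : ℕ :=
  sInf {j : ℕ | 1 ≤ j ∧ g ∣ X ^ j - 1}

/-- The period set of `f`: the orders of all nonzero divisors of `f` with nonzero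
constant term. -/
noncomputable def periodSet {F : Type*} [Field F] (f : Polynomial F) : Set ℕ :=
  {t : ℕ | ∃ g : Polynomial F, g ∣ f ∧ g ≠ 0 ∧ g.coeff 0 ≠ 0 ∧ t = polyOrd g}

/-! An irreducible `h` of order `p * s` would divide `X ^ (p * s) - 1 = (X ^ s - 1) ^ p`, hence
`X ^ s - 1`, against the minimality of its order: irreducible polynomials have order prime to `p`. So if the period set
of `f` is `{1, T}` with `p ∣ T`, every irreducible factor of `f` divides `X - 1`, and `f(0) = 1`
forces `f = (1 - X) ^ r`. The divisors of `(1 - X) ^ r` are the powers `(1 - X) ^ e`; for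
`2 ≤ e ≤ p` their order is `p`, since `(1 - X) ^ e ∣ (X - 1) ^ p = X ^ p - 1` while
`(X - 1) ^ 2 ∣ X ^ j - 1` only when `p ∣ j`. As the order of a polynomial bounds its degree, the
period set of `(1 - X) ^ r` is `{1, p}` exactly when `2 ≤ r ≤ p`. -/

section polyOrd

variable {F : Type*} [Field F] {f g : F[X]}

lemma polyOrd_le {j : ℕ} (hj : 1 ≤ j) (h : g ∣ X ^ j - 1) : polyOrd g ≤ j :=
  Nat.sInf_le ⟨hj, h⟩

lemma polyOrd_pos {j : ℕ} (hj : 1 ≤ j) (h : g ∣ X ^ j - 1) : 0 < polyOrd g :=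
  (Nat.sInf_mem (s := {j | 1 ≤ j ∧ g ∣ X ^ j - 1}) ⟨j, hj, h⟩).1

lemma dvd_X_pow_polyOrd_sub_one (h : polyOrd g ≠ 0) : g ∣ X ^ polyOrd g - 1 :=
  (Nat.sInf_mem (Nat.nonempty_of_pos_sInf (Nat.pos_of_ne_zero h))).2

lemma polyOrd_eq_one_iff : polyOrd g = 1 ↔ g ∣ X - 1 := by
  refine ⟨fun h ↦ by simpa [h] using dvd_X_pow_polyOrd_sub_one (g := g) (by omega), fun h ↦ ?_⟩
  have hg : g ∣ X ^ 1 - 1 := by rwa [pow_one]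
  have := polyOrd_le le_rfl hg
  have := polyOrd_pos le_rfl hg
  omega

lemma Associated.polyOrd_eq {g' : F[X]} (h : Associated g g') : polyOrd g = polyOrd g' := by
  simp only [polyOrd, h.dvd_iff_dvd_left]

lemma natDegree_le_polyOrd (h : polyOrd g ≠ 0) : g.natDegree ≤ polyOrd g := by
  have hne : (X ^ polyOrd g - C 1 : F[X]) ≠ 0 := X_pow_sub_C_ne_zero (Nat.pos_of_ne_zero h) 1
  have hdvd : g ∣ X ^ polyOrd g - C 1 := by rw [C_1]; exact dvd_X_pow_polyOrd_sub_one h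
  exact (natDegree_le_of_dvd hdvd hne).trans_eq natDegree_X_pow_sub_C

lemma polyOrd_mem_periodSet (hgf : g ∣ f) (hf : f.coeff 0 ≠ 0) : polyOrd g ∈ periodSet f := by
  obtain ⟨k, rfl⟩ := hgf
  rw [mul_coeff_zero] at hf
  exact ⟨g, dvd_mul_right g k, by rintro rfl; simp at hf, left_ne_zero_of_mul hf, rfl⟩

end polyOrd

section OneSubX

variable {F : Type*} [Field F]

lemma irreducible_one_sub_X : Irreducible (1 - X : F[X]) := by
  refine irreducible_of_degree_eq_one ?_
  rw [← neg_sub, degree_neg, ← C_1, degree_X_sub_C]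

lemma natDegree_one_sub_X_pow (n : ℕ) : ((1 - X : F[X]) ^ n).natDegree = n := by
  rw [natDegree_pow, ← neg_sub, natDegree_neg, ← C_1, natDegree_X_sub_C, mul_one]

lemma coeff_zero_one_sub_X_pow (n : ℕ) : ((1 - X : F[X]) ^ n).coeff 0 = 1 := by
  simp [coeff_zero_eq_eval_zero]

lemma one_sub_X_pow_dvd_X_sub_one {r : ℕ} (hr : r ≤ 1) : (1 - X : F[X]) ^ r ∣ X - 1 := by
  refine (pow_dvd_pow _ hr).trans ?_
  rw [pow_one, ← neg_sub]
  exact neg_dvd.2 dvd_rfl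

lemma eq_one_sub_X_pow_of_forall_irreducible_dvd {f : F[X]} (hf : f.coeff 0 = 1)
    (H : ∀ h, Irreducible h → h ∣ f → Associated h (1 - X)) : f = (1 - X) ^ f.natDegree := by
  have hf0 : f ≠ 0 := by rintro rfl; simp at hf
  obtain ⟨n, a, hna, rfl⟩ := WfDvdMonoid.max_power_factor' hf0 irreducible_one_sub_X.not_isUnit
  have ha : IsUnit a := by
    by_contra hu
    obtain ⟨h, hh, hha⟩ := WfDvdMonoid.exists_irreducible_factor hu (right_ne_zero_of_mul hf0)
    exact hna ((H h hh (dvd_mul_of_dvd_right hha _)).dvd_iff_dvd_left.1 hha)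
  obtain ⟨c, -, rfl⟩ := isUnit_iff.1 ha
  obtain rfl : c = 1 := by simpa [mul_coeff_zero, coeff_zero_one_sub_X_pow] using hf
  rw [C_1, mul_one, natDegree_one_sub_X_pow]

lemma X_sub_one_sq_dvd_X_pow_sub_one_iff {j : ℕ} : (X - 1 : F[X]) ^ 2 ∣ X ^ j - 1 ↔ (j : F) = 0 := by
  rw [← geom_sum_mul, pow_two, mul_dvd_mul_iff_right (X_sub_C_ne_zero 1), ← C_1, dvd_iff_isRoot]
  simp

end OneSubX

section CharP

variable {F : Type*} [Field F] {p : ℕ} [hp : Fact p.Prime] [CharP F p]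

lemma polyOrd_one_sub_X_pow {e : ℕ} (he : 2 ≤ e) (hep : e ≤ p) :
    polyOrd ((1 - X : F[X]) ^ e) = p := by
  have hdvd : (1 - X : F[X]) ^ e ∣ X ^ p - 1 := by
    rw [show (X : F[X]) ^ p - 1 = (X - 1) ^ p by rw [sub_pow_char, one_pow]]
    have h1 : (1 - X : F[X]) ∣ X - 1 := by simpa using one_sub_X_pow_dvd_X_sub_one (F := F) le_rfl
    exact (pow_dvd_pow _ hep).trans (pow_dvd_pow_of_dvd h1 p)
  have hpos := polyOrd_pos hp.out.one_lt.le hdvd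
  have hsq : (X - 1 : F[X]) ^ 2 ∣ X ^ polyOrd ((1 - X : F[X]) ^ e) - 1 := by
    rw [← neg_sub, neg_sq]
    exact (pow_dvd_pow _ he).trans (dvd_X_pow_polyOrd_sub_one hpos.ne')
  have hp_dvd := (CharP.cast_eq_zero_iff F p _).1 (X_sub_one_sq_dvd_X_pow_sub_one_iff.1 hsq)
  exact (polyOrd_le hp.out.one_lt.le hdvd).antisymm (Nat.le_of_dvd hpos hp_dvd)

lemma not_dvd_polyOrd_of_irreducible {h : F[X]} (hh : Irreducible h) (h0 : polyOrd h ≠ 0) :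
    ¬ p ∣ polyOrd h := by
  rintro ⟨s, hs⟩
  have hs0 : 0 < s := Nat.pos_of_ne_zero (by rintro rfl; exact h0 hs)
  have hdvd : h ∣ (X ^ s - 1) ^ p := by
    rw [sub_pow_char, one_pow, ← pow_mul, mul_comm, ← hs]
    exact dvd_X_pow_polyOrd_sub_one h0
  have := polyOrd_le hs0 (hh.prime.dvd_of_dvd_pow hdvd)
  have := hp.out.two_le
  nlinarith

lemma eq_one_sub_X_pow_of_periodSet_eq_pair {f : F[X]} {T : ℕ} (hT : T ≠ 0) (hpT : p ∣ T)
    (hf : f.coeff 0 = 1) (hps : periodSet f = {1, T}) : f = (1 - X) ^ f.natDegree := by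
  refine eq_one_sub_X_pow_of_forall_irreducible_dvd hf fun h hh hhf ↦ ?_
  have hmem := polyOrd_mem_periodSet hhf (by simp [hf])
  rw [hps] at hmem
  rcases hmem with h1 | rfl
  · refine hh.associated_of_dvd irreducible_one_sub_X ?_
    rw [← neg_sub]
    exact dvd_neg.2 (polyOrd_eq_one_iff.1 h1)
  · exact absurd hpT (not_dvd_polyOrd_of_irreducible hh hT)

lemma periodSet_one_sub_X_pow {r : ℕ} (hr : 2 ≤ r) (hrp : r ≤ p) :
    periodSet ((1 - X : F[X]) ^ r) = {1, p} := by
  ext t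
  constructor
  · rintro ⟨g, hg, -, -, rfl⟩
    obtain ⟨e, he, hassoc⟩ := (dvd_prime_pow irreducible_one_sub_X.prime r).1 hg
    rw [hassoc.polyOrd_eq]
    rcases lt_or_ge e 2 with he2 | he2
    · exact Or.inl (polyOrd_eq_one_iff.2 (one_sub_X_pow_dvd_X_sub_one (by omega)))
    · exact Or.inr (polyOrd_one_sub_X_pow he2 (he.trans hrp))
  · have hcoeff : ((1 - X : F[X]) ^ r).coeff 0 ≠ 0 := by simp [coeff_zero_one_sub_X_pow]
    rintro (rfl | rfl)
    · rw [← (polyOrd_eq_one_iff (g := (1 : F[X]))).2 (one_dvd _)]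
      exact polyOrd_mem_periodSet (one_dvd _) hcoeff
    · rw [← polyOrd_one_sub_X_pow (F := F) le_rfl hp.out.two_le]
      exact polyOrd_mem_periodSet (pow_dvd_pow _ hr) hcoeff

lemma periodSet_one_sub_X_pow_eq_pair_iff {r T : ℕ} (hpT : p ∣ T) :
    periodSet ((1 - X : F[X]) ^ r) = {1, T} ↔ T = p ∧ 2 ≤ r ∧ r ≤ p := by
  refine ⟨fun hps ↦ ?_, fun ⟨hTp, hr, hrp⟩ ↦ hTp ▸ periodSet_one_sub_X_pow hr hrp⟩
  have hcoeff : ((1 - X : F[X]) ^ r).coeff 0 ≠ 0 := by simp [coeff_zero_one_sub_X_pow]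
  have hr : 2 ≤ r := by
    by_contra! hr
    obtain ⟨g, hg, -, -, rfl⟩ : T ∈ periodSet ((1 - X : F[X]) ^ r) := by simp [hps]
    rw [polyOrd_eq_one_iff.2 (hg.trans (one_sub_X_pow_dvd_X_sub_one (by omega)))] at hpT
    exact hp.out.one_lt.ne' (Nat.dvd_one.1 hpT)
  have hTp : T = p := by
    have hp_mem := polyOrd_mem_periodSet (pow_dvd_pow (1 - X : F[X]) hr) hcoeff
    rw [polyOrd_one_sub_X_pow le_rfl hp.out.two_le, hps] at hp_mem
    exact (hp_mem.resolve_left hp.out.one_lt.ne').symm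
  have hself := polyOrd_mem_periodSet dvd_rfl hcoeff
  simp only [hps, hTp, Set.mem_insert_iff, Set.mem_singleton_iff] at hself
  have hdeg := natDegree_le_polyOrd (g := (1 - X : F[X]) ^ r)
    (by rcases hself with h | h <;> simp [h, hp.out.ne_zero])
  rw [natDegree_one_sub_X_pow] at hdeg
  refine ⟨hTp, hr, ?_⟩
  rcases hself with h | h <;> omega

end CharP

lemma Nat.Prime.pow_mul_eq_self_iff {p u M : ℕ} (hp : p.Prime) (hu : 1 ≤ u) :
    p ^ u * M = p ↔ M = 1 ∧ u = 1 := by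
  refine ⟨fun h ↦ ?_, fun ⟨hM, hu⟩ ↦ by rw [hM, hu, pow_one, mul_one]⟩
  have hu1 : u = 1 := by
    refine le_antisymm ((Nat.pow_dvd_pow_iff_le_right hp.one_lt).1 ?_) hu
    rw [pow_one]
    exact Dvd.intro M h
  subst hu1
  exact ⟨Nat.eq_of_mul_eq_mul_left hp.pos (by simpa using h), rfl⟩

/-- Let `q = p^k` with `p` prime and `T = p^u · M` with `u ≥ 1` and `gcd(M, q) = 1`.
A polynomial `f` over `GF(q)` of degree `r` with `f(0) = 1` and period set `{1, T}`
exists if and only if `M = 1`, `u = 1` and `2 ≤ r ≤ p`; and in that case any such `f`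
is necessarily `(1-x)^r`. -/
theorem stmt_12 {F : Type*} [Field F] [Fintype F] (p : ℕ) [hp : Fact p.Prime] [CharP F p]
    (q : ℕ) (hq : q = Fintype.card F)
    (T M u : ℕ) (hu : 1 ≤ u) (hM : Nat.Coprime M q) (hTMu : T = p ^ u * M) (r : ℕ) :
    ((∃ f : Polynomial F, f.natDegree = r ∧ f.coeff 0 = 1 ∧ periodSet f = {1, T}) ↔
        (M = 1 ∧ u = 1 ∧ 2 ≤ r ∧ r ≤ p)) ∧
      ∀ f : Polynomial F, f.natDegree = r → f.coeff 0 = 1 → periodSet f = {1, T} →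
        f = (1 - X) ^ r := by
  have hM0 : M ≠ 0 := by
    rintro rfl
    rw [Nat.coprime_zero_left, hq] at hM
    exact Fintype.one_lt_card.ne' hM
  have hpT : p ∣ T := hTMu ▸ (dvd_pow_self p (by omega)).mul_right M
  have hT0 : T ≠ 0 := hTMu ▸ mul_ne_zero (pow_ne_zero u hp.out.ne_zero) hM0
  have hTp : T = p ↔ M = 1 ∧ u = 1 := hTMu ▸ hp.out.pow_mul_eq_self_iff hu
  have huniq (f : F[X]) (hf : f.coeff 0 = 1) (hps : periodSet f = {1, T}) :
      f = (1 - X) ^ f.natDegree :=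
    eq_one_sub_X_pow_of_periodSet_eq_pair hT0 hpT hf hps
  refine ⟨⟨?_, ?_⟩, fun f hr hf hps ↦ hr ▸ huniq f hf hps⟩
  · rintro ⟨f, rfl, hf, hps⟩
    rw [huniq f hf hps, periodSet_one_sub_X_pow_eq_pair_iff hpT, hTp] at hps
    exact ⟨hps.1.1, hps.1.2, hps.2⟩
  · rintro ⟨hM1, hu1, hr, hrp⟩
    exact ⟨(1 - X) ^ r, natDegree_one_sub_X_pow r, coeff_zero_one_sub_X_pow r,
      (periodSet_one_sub_X_pow_eq_pair_iff hpT).2 ⟨hTp.2 ⟨hM1, hu1⟩, hr, hrp⟩⟩
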